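/- Decomposition of until robustness-to-go at the current step when 0 ∈ I: for consecutive sample times t_k < t_{k+1} and interval I = [0, b⟩ containing 0, ρ↬(s,t_k,t̂,φ U_I ψ) = max( ρ↬(s,t_k,t̂,ψ), min( ρ↬(s,t_k,t̂,φ), ρ↬(s,t_{k+1},t̂, φ U_{I←_Δ} ψ) ) ), where Δ = t_{k+1}−t_k and I←_Δ = (I−Δ) ∩ ℝ≥0. -/

import Mathlib

open Classical

noncomputable section

/-- STL syntax over states of type `X`, with `untl a b` the until operator
over the time interval `[a, b]`. -/
inductive STL (X : Type) : Type
  | top : STL X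
  | pred : (X → ℝ) → STL X
  | neg : STL X → STL X
  | conj : STL X → STL X → STL X
  | untl : ℝ → ℝ → STL X → STL X → STL X

namespace STL

variable {X : Type}

/-- Boolean "false". -/
def bot : STL X := neg top

/-- Disjunction, defined from negation and conjunction. -/
def disj (φ ψ : STL X) : STL X := neg (conj (neg φ) (neg ψ))

/-- Pointwise STL satisfaction over a (finite) time domain `T`. -/
def sat (T : Set ℝ) (s : ℝ → X) : STL X → ℝ → Prop
  | top, _ => True
  | pred f, t => 0 < f (s t)
  | neg φ, t => ¬ sat T s φ t
  | conj φ ψ, t => sat T s φ t ∧ sat T s ψ t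
  | untl a b φ ψ, t => ∃ t', t' ∈ T ∧ t' - t ∈ Set.Icc a b ∧ sat T s ψ t' ∧
      ∀ t'', t'' ∈ T → t ≤ t'' → t'' < t' → sat T s φ t''

/-- Ordinary STL robustness, valued in the extended reals. -/
noncomputable def rob (T : Set ℝ) (s : ℝ → X) : STL X → ℝ → EReal
  | top, _ => ⊤
  | pred f, t => (f (s t) : EReal)
  | neg φ, t => - rob T s φ t
  | conj φ ψ, t => min (rob T s φ t) (rob T s ψ t)
  | untl a b φ ψ, t =>
      sSup ((fun t' => min (rob T s ψ t')
        (sInf ((fun t'' => rob T s φ t'') '' {u | u ∈ T ∧ t ≤ u ∧ u < t'}))) ''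
        {u | u ∈ T ∧ u - t ∈ Set.Icc a b})

/-- STL robustness-to-go from threshold time `th`, valued in the extended reals.
Predicates evaluated at times `≤ th` contribute `±∞` according to their sign. -/
noncomputable def robToGo (T : Set ℝ) (s : ℝ → X) (th : ℝ) : STL X → ℝ → EReal
  | top, _ => ⊤
  | pred f, t =>
      if th < t then (f (s t) : EReal)
      else (if 0 < f (s t) then (⊤ : EReal) else (⊥ : EReal))
  | neg φ, t => - robToGo T s th φ t
  | conj φ ψ, t => min (robToGo T s th φ t) (robToGo T s th ψ t)
  | untl a b φ ψ, t =>
      sSup ((fun t' => min (robToGo T s th ψ t')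
        (sInf ((fun t'' => robToGo T s th φ t'') '' {u | u ∈ T ∧ t ≤ u ∧ u < t'}))) ''
        {u | u ∈ T ∧ u - t ∈ Set.Icc a b})

/-- STL formula progression by a time step `Δ` given observed state `x`.
The progressed until interval is `I ← Δ = (I - Δ) ∩ ℝ≥0`, i.e.
`[max (a - Δ) 0, b - Δ]` (which is empty, hence equivalent to `⊥`, when `b < Δ`). -/
noncomputable def prog (Δ : ℝ) (x : X) : STL X → STL X
  | top => top
  | pred f => if 0 < f x then top else bot
  | neg φ => neg (prog Δ x φ)
  | conj φ ψ => conj (prog Δ x φ) (prog Δ x ψ)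
  | untl a b φ ψ =>
      if 0 < a then conj (prog Δ x φ) (untl (max (a - Δ) 0) (b - Δ) φ ψ)
      else disj (prog Δ x ψ) (conj (prog Δ x φ) (untl (max (a - Δ) 0) (b - Δ) φ ψ))

/-- All until intervals in the formula have nonnegative left endpoints. -/
def intervalsNonneg : STL X → Prop
  | top => True
  | pred _ => True
  | neg φ => intervalsNonneg φ
  | conj φ ψ => intervalsNonneg φ ∧ intervalsNonneg ψ
  | untl a _ φ ψ => 0 ≤ a ∧ intervalsNonneg φ ∧ intervalsNonneg ψ

/-- The convention that predicate values are never exactly zero on the time domain. -/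
def nonzeroOn (T : Set ℝ) (s : ℝ → X) : STL X → Prop
  | top => True
  | pred f => ∀ t ∈ T, f (s t) ≠ 0
  | neg φ => nonzeroOn T s φ
  | conj φ ψ => nonzeroOn T s φ ∧ nonzeroOn T s ψ
  | untl _ _ φ ψ => nonzeroOn T s φ ∧ nonzeroOn T s ψ

/-- `tk` and `tk1` are consecutive sample times of the time domain `T`:
both are samples, `tk < tk1`, and there is no sample strictly between them. -/
def Consecutive (T : Set ℝ) (tk tk1 : ℝ) : Prop :=
  tk ∈ T ∧ tk1 ∈ T ∧ tk < tk1 ∧ ∀ u ∈ T, u ≤ tk ∨ tk1 ≤ u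

/-- The time horizon of a (bounded) STL formula. -/
def horizon : STL X → ℝ
  | top => 0
  | pred _ => 0
  | neg φ => horizon φ
  | conj φ ψ => max (horizon φ) (horizon ψ)
  | untl _ b φ ψ => b + max (horizon φ) (horizon ψ)

end STL

namespace STL

def untilValue {α : Type*} [CompleteLinearOrder α] (T : Set ℝ) (ρφ ρψ : ℝ → α)
    (a b t : ℝ) : α :=
  sSup ((fun t' => min (ρψ t') (sInf (ρφ '' {u | u ∈ T ∧ t ≤ u ∧ u < t'}))) ''
    {u | u ∈ T ∧ u - t ∈ Set.Icc a b})

theorem robToGo_untl {X : Type} (T : Set ℝ) (s : ℝ → X) (th a b : ℝ) (φ ψ : STL X) (t : ℝ) :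
    robToGo T s th (untl a b φ ψ) t =
      untilValue T (robToGo T s th φ) (robToGo T s th ψ) a b t :=
  rfl

namespace Consecutive

variable {T : Set ℝ} {tk tk1 : ℝ}

theorem window_eq_insert (hc : Consecutive T tk tk1) {b : ℝ} (hb : 0 ≤ b) :
    {u | u ∈ T ∧ u - tk ∈ Set.Icc 0 b} =
      insert tk {u | u ∈ T ∧ u - tk1 ∈ Set.Icc 0 (b - (tk1 - tk))} := by
  obtain ⟨htk, -, hlt, hgap⟩ := hc
  ext u
  simp only [Set.mem_ofPred_eq, Set.mem_insert_iff, Set.mem_Icc]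
  constructor
  · rintro ⟨hu, h0, hub⟩
    rcases hgap u hu with h | h
    · exact Or.inl (le_antisymm h (by linarith))
    · exact Or.inr ⟨hu, by linarith, by linarith⟩
  · rintro (rfl | ⟨hu, h1, h2⟩)
    · exact ⟨htk, by linarith, by linarith⟩
    · exact ⟨hu, by linarith, by linarith⟩

theorem Ico_eq_insert (hc : Consecutive T tk tk1) {t : ℝ} (ht : tk1 ≤ t) :
    {u | u ∈ T ∧ tk ≤ u ∧ u < t} = insert tk {u | u ∈ T ∧ tk1 ≤ u ∧ u < t} := by
  obtain ⟨htk, -, hlt, hgap⟩ := hc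
  ext u
  simp only [Set.mem_ofPred_eq, Set.mem_insert_iff]
  constructor
  · rintro ⟨hu, h1, h2⟩
    rcases hgap u hu with h | h
    · exact Or.inl (le_antisymm h h1)
    · exact Or.inr ⟨hu, h, h2⟩
  · rintro (rfl | ⟨hu, h1, h2⟩)
    · exact ⟨htk, le_rfl, hlt.trans_le ht⟩
    · exact ⟨hu, by linarith, h2⟩

end Consecutive

theorem sSup_image_min_left {α β : Type*} [CompleteLinearOrder α] (c : α) (g : β → α)
    (A : Set β) : sSup ((fun u => min c (g u)) '' A) = min c (sSup (g '' A)) := by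
  rw [sSup_image, sSup_image]
  exact (inf_iSup₂_eq c).symm

/-- Splitting off the current sample `tk`: it is the only sample of the window before `tk1`,
and it lies in every later prefix `[tk, t')`. -/
theorem untilValue_zero_eq_max {α : Type*} [CompleteLinearOrder α] {T : Set ℝ}
    (ρφ ρψ : ℝ → α) {tk tk1 : ℝ} (hc : Consecutive T tk tk1) {b : ℝ} (hb : 0 ≤ b) :
    untilValue T ρφ ρψ 0 b tk =
      max (ρψ tk) (min (ρφ tk) (untilValue T ρφ ρψ 0 (b - (tk1 - tk)) tk1)) := by
  set S := {u | u ∈ T ∧ u - tk1 ∈ Set.Icc 0 (b - (tk1 - tk))}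
  have hempty : {u | u ∈ T ∧ tk ≤ u ∧ u < tk} = ∅ :=
    Set.eq_empty_of_forall_notMem fun u hu => hu.2.1.not_gt hu.2.2
  have hlater : ∀ t' ∈ S,
      min (ρψ t') (sInf (ρφ '' {u | u ∈ T ∧ tk ≤ u ∧ u < t'})) =
        min (ρφ tk) (min (ρψ t') (sInf (ρφ '' {u | u ∈ T ∧ tk1 ≤ u ∧ u < t'}))) := by
    intro t' ht'
    rw [hc.Ico_eq_insert (by linarith [ht'.2.1]), Set.image_insert_eq, sInf_insert,
      min_left_comm]
  rw [untilValue, hc.window_eq_insert hb, Set.image_insert_eq, sSup_insert, hempty,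
    Set.image_empty, sInf_empty, min_top_right, Set.image_congr hlater, sSup_image_min_left]
  rfl

end STL

theorem stmt11_general {X : Type} (T : Set ℝ) (s : ℝ → X) (th : ℝ)
    (φ ψ : STL X) (tk tk1 : ℝ) (hc : STL.Consecutive T tk tk1)
    (b : ℝ) (hb : 0 ≤ b) :
    STL.robToGo T s th (STL.untl 0 b φ ψ) tk =
    max (STL.robToGo T s th ψ tk)
      (min (STL.robToGo T s th φ tk)
        (STL.robToGo T s th
          (STL.untl (max (0 - (tk1 - tk)) 0) (b - (tk1 - tk)) φ ψ) tk1)) := by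
  have hlower : max (0 - (tk1 - tk)) 0 = 0 := max_eq_right (by linarith [hc.2.2.1])
  rw [hlower, STL.robToGo_untl, STL.robToGo_untl]
  exact STL.untilValue_zero_eq_max _ _ hc hb

/-- decomposition of until robustness-to-go at the current step
when the interval `[0, b]` contains `0`. -/
theorem stmt11 {X : Type} (T : Set ℝ) (hT : T.Finite) (s : ℝ → X) (th : ℝ)
    (φ ψ : STL X) (tk tk1 : ℝ) (hc : STL.Consecutive T tk tk1)
    (b : ℝ) (hb : 0 ≤ b) :
    STL.robToGo T s th (STL.untl 0 b φ ψ) tk =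
    max (STL.robToGo T s th ψ tk)
      (min (STL.robToGo T s th φ tk)
        (STL.robToGo T s th
          (STL.untl (max (0 - (tk1 - tk)) 0) (b - (tk1 - tk)) φ ψ) tk1)) :=
  stmt11_general T s th φ ψ tk tk1 hc b hb

end
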